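/- arXiv:0704.1702 — 3 statements merged into one kernel-verified Lean document; each statement's English description precedes it below -/
import Mathlib

section
/- Let K be a positive rational number and let B consist of exactly three baskets (b₁, r₁), (b₂, r₂), (b₃, r₃) with r₁ ≤ r₂ ≤ r₃, such that P_2(K, B) = 1. Then 1/r₁ + 1/r₂ + 1/r₃ > 1; consequently either (r₁, r₂) = (2, 2), or (r₁, r₂, r₃) is one of (2, 3, 3), (2, 3, 4), (2, 3, 5). -/
/-- A basket `(b, r)` with `0 < b < r` and `gcd(b, r) = 1`. -/
structure Basket where
  b : ℕ
  r : ℕ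
  b_pos : 0 < b
  b_lt_r : b < r
  coprime : Nat.gcd b r = 1

/-- Reid's correction term `l_Q(m)` of a basket `Q` for `m ≥ 2`. -/
def Basket.corr (Q : Basket) (m : ℕ) : ℚ :=
  ∑ j ∈ Finset.Icc 1 (m - 1),
    ((Q.b * j % Q.r : ℕ) : ℚ) * ((Q.r : ℚ) - ((Q.b * j % Q.r : ℕ) : ℚ)) / (2 * (Q.r : ℚ))

/-- The virtual `m`-th plurigenus `P_m(K, B)` for `m ≥ 2`. -/
def plurigenus (K : ℚ) (B : Multiset Basket) (m : ℕ) : ℚ :=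
  (1 / 12 : ℚ) * m * (m - 1) * (2 * m - 1) * K + (B.map (fun Q => Q.corr m)).sum

/-- `b' = b` if `2b ≤ r`, and `b' = r - b` otherwise. -/
def Basket.b' (Q : Basket) : ℕ := if 2 * Q.b ≤ Q.r then Q.b else Q.r - Q.b

/-- The basket `(1, 2)`. -/
def B12 : Basket := ⟨1, 2, by decide, by decide, by decide⟩

/-
Since `l_Q(2) = b(r - b)/(2r)` and `(b - 1)(r - b - 1) ≥ 0`, every basket has
`2 l_Q(2) ≥ 1 - 1/r`. Summing over the baskets, `2 = 2 P_2 = K + Σ 2 l_Q(2) ≥ K + #B - Σ 1/r`,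
so `Σ 1/r > #B - 2` as `K > 0`; for three baskets this is `1/r₁ + 1/r₂ + 1/r₃ > 1`, whose
solutions with `2 ≤ r₁ ≤ r₂ ≤ r₃` are the classical Platonic triples.
-/

lemma Basket.two_le_r (Q : Basket) : 2 ≤ Q.r := lt_of_le_of_lt Q.b_pos Q.b_lt_r

lemma Basket.corr_two (Q : Basket) :
    Q.corr 2 = (Q.b : ℚ) * ((Q.r : ℚ) - (Q.b : ℚ)) / (2 * (Q.r : ℚ)) := by
  rw [Basket.corr, show (2 - 1 : ℕ) = 1 from rfl, Finset.Icc_self, Finset.sum_singleton,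
    Nat.mul_one, Nat.mod_eq_of_lt Q.b_lt_r]

lemma Basket.one_sub_one_div_r_le_two_mul_corr_two (Q : Basket) :
    1 - 1 / (Q.r : ℚ) ≤ 2 * Q.corr 2 := by
  have hr : (0 : ℚ) < Q.r := by exact_mod_cast Q.b_pos.trans Q.b_lt_r
  have hb : (1 : ℚ) ≤ Q.b := by exact_mod_cast Q.b_pos
  have hbr : (Q.b : ℚ) + 1 ≤ Q.r := by exact_mod_cast Q.b_lt_r
  have hcorr : 2 * Q.corr 2 = Q.b * (Q.r - Q.b) / Q.r := by
    rw [Basket.corr_two]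
    field_simp
  rw [hcorr, one_sub_div hr.ne']
  exact div_le_div_of_nonneg_right (by nlinarith) hr.le

lemma plurigenus_two (K : ℚ) (B : Multiset Basket) :
    plurigenus K B 2 = K / 2 + (B.map fun Q => Q.corr 2).sum := by
  norm_num [plurigenus]
  ring

theorem card_sub_two_lt_sum_one_div_r {K : ℚ} (hK : 0 < K) {B : Multiset Basket}
    (h : plurigenus K B 2 = 1) :
    (Multiset.card B : ℚ) - 2 < (B.map fun Q => 1 / (Q.r : ℚ)).sum := by
  have hle : (B.map fun Q => 1 - 1 / (Q.r : ℚ)).sum ≤ (B.map fun Q => 2 * Q.corr 2).sum :=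
    Multiset.sum_map_le_sum_map _ _ fun Q _ => Q.one_sub_one_div_r_le_two_mul_corr_two
  rw [Multiset.sum_map_sub, Multiset.map_const', Multiset.sum_replicate, nsmul_one,
    Multiset.sum_map_mul_left] at hle
  rw [plurigenus_two] at h
  linarith

theorem eq_platonic_of_one_lt_one_div_add_one_div_add_one_div {a b c : ℕ} (ha : 2 ≤ a)
    (hab : a ≤ b) (hbc : b ≤ c) (h : 1 < 1 / (a : ℚ) + 1 / (b : ℚ) + 1 / (c : ℚ)) :
    (a = 2 ∧ b = 2) ∨ (a = 2 ∧ b = 3 ∧ c = 3) ∨ (a = 2 ∧ b = 3 ∧ c = 4) ∨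
      (a = 2 ∧ b = 3 ∧ c = 5) := by
  have ha₀ : (0 : ℚ) < a := by exact_mod_cast (by omega : 0 < a)
  have hb₀ : (0 : ℚ) < b := by exact_mod_cast (by omega : 0 < b)
  have hba : 1 / (b : ℚ) ≤ 1 / a := one_div_le_one_div_of_le ha₀ (by exact_mod_cast hab)
  have hcb : 1 / (c : ℚ) ≤ 1 / b := one_div_le_one_div_of_le hb₀ (by exact_mod_cast hbc)
  have ha3 : (a : ℚ) < 3 := lt_of_one_div_lt_one_div (by norm_num) (by linarith)
  have : a < 3 := by exact_mod_cast ha3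
  obtain rfl : a = 2 := by omega
  have hb4 : (b : ℚ) < 4 := lt_of_one_div_lt_one_div (by norm_num) (by push_cast at h; linarith)
  have : b < 4 := by exact_mod_cast hb4
  interval_cases b
  · exact Or.inl ⟨rfl, rfl⟩
  · have hc6 : (c : ℚ) < 6 :=
      lt_of_one_div_lt_one_div (by norm_num) (by push_cast at h; linarith)
    have : c < 6 := by exact_mod_cast hc6
    interval_cases c <;> simp

theorem stmt6 (K : ℚ) (hK : 0 < K) (Q₁ Q₂ Q₃ : Basket)
    (h12 : Q₁.r ≤ Q₂.r) (h23 : Q₂.r ≤ Q₃.r)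
    (h2 : plurigenus K {Q₁, Q₂, Q₃} 2 = 1) :
    1 / (Q₁.r : ℚ) + 1 / (Q₂.r : ℚ) + 1 / (Q₃.r : ℚ) > 1 ∧
    ((Q₁.r = 2 ∧ Q₂.r = 2) ∨
     (Q₁.r = 2 ∧ Q₂.r = 3 ∧ Q₃.r = 3) ∨
     (Q₁.r = 2 ∧ Q₂.r = 3 ∧ Q₃.r = 4) ∨
     (Q₁.r = 2 ∧ Q₂.r = 3 ∧ Q₃.r = 5)) := by
  have hcard := card_sub_two_lt_sum_one_div_r hK h2
  simp only [Multiset.insert_eq_cons, Multiset.card_cons, Multiset.card_singleton,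
    Multiset.map_cons, Multiset.map_singleton, Multiset.sum_cons, Multiset.sum_singleton] at hcard
  have hsum : 1 < 1 / (Q₁.r : ℚ) + 1 / (Q₂.r : ℚ) + 1 / (Q₃.r : ℚ) := by
    push_cast at hcard
    linarith
  exact ⟨hsum, eq_platonic_of_one_lt_one_div_add_one_div_add_one_div Q₁.two_le_r h12 h23 hsum⟩
end

section
/- Let K be a positive rational number and let B consist of exactly three baskets (1, 2), (1, 2), (b, r) with r ≥ 2, such that P_2(K, B) = 1 and P_3(K, B) = 2. Then K = 1/r, b' = 1 (i.e. b = 1 or b = r − 1), and P_4(K, B) = 4 if r ≥ 3 while P_4(K, B) = 5 if r = 2. -/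
def corrTerm (r x : ℕ) : ℚ :=
  ((x % r : ℕ) : ℚ) * ((r : ℚ) - ((x % r : ℕ) : ℚ)) / (2 * r)

lemma corrTerm_of_le {r x : ℕ} (h : x ≤ r) : corrTerm r x = x * (r - x) / (2 * r) := by
  rcases h.lt_or_eq with h | rfl
  · rw [corrTerm, Nat.mod_eq_of_lt h]
  · simp [corrTerm]

lemma corrTerm_eq_of_add_modEq_zero {r a c : ℕ} (h : a + c ≡ 0 [MOD r]) :
    corrTerm r a = corrTerm r c := by
  rcases Nat.eq_zero_or_pos r with rfl | hr
  · simp [corrTerm]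
  have hdvd : r ∣ a % r + c % r := by
    rw [← Nat.modEq_zero_iff_dvd, Nat.ModEq, ← Nat.add_mod]
    exact h
  obtain ⟨k, hk⟩ := hdvd
  have hk2 : k < 2 := by
    have := Nat.mod_lt a hr
    have := Nat.mod_lt c hr
    nlinarith
  unfold corrTerm
  interval_cases k
  · obtain ⟨ha, hc⟩ : a % r = 0 ∧ c % r = 0 := by omega
    simp [ha, hc]
  · have hc : ((c % r : ℕ) : ℚ) = r - (a % r : ℕ) := by
      rw [eq_sub_iff_add_eq, ← Nat.cast_add, add_comm, hk, mul_one]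
    rw [hc]
    ring

namespace Basket

lemma corr_eq_sum_corrTerm (Q : Basket) (m : ℕ) :
    Q.corr m = ∑ j ∈ Finset.Icc 1 (m - 1), corrTerm Q.r (Q.b * j) := rfl

lemma corr_two_s7 (Q : Basket) : Q.corr 2 = Q.b * (Q.r - Q.b) / (2 * Q.r) := by
  rw [corr_eq_sum_corrTerm, Finset.Icc_self, Finset.sum_singleton, mul_one,
    corrTerm_of_le Q.b_lt_r.le]

lemma b'_eq_one_iff (Q : Basket) : Q.b' = 1 ↔ Q.b = 1 ∨ Q.b = Q.r - 1 := by
  have := Q.b_pos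
  have := Q.b_lt_r
  unfold b'
  split_ifs <;> omega

lemma b_eq_one_or_of_mul_sub_lt (Q : Basket) (h : Q.b * (Q.r - Q.b) < Q.r) :
    Q.b = 1 ∨ Q.b = Q.r - 1 := by
  have := Q.b_pos
  have := Q.b_lt_r
  by_contra! hb
  obtain ⟨s, hs⟩ : ∃ s, Q.r = Q.b + s := ⟨Q.r - Q.b, by omega⟩
  rw [hs, Nat.add_sub_cancel_left] at h
  have : 2 ≤ Q.b := by omega
  have : 2 ≤ s := by omega
  nlinarith

lemma mul_sub_eq_of_b'_eq_one (Q : Basket) (h : Q.b' = 1) :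
    (Q.b : ℚ) * (Q.r - Q.b) = Q.r - 1 := by
  rcases Q.b'_eq_one_iff.1 h with hb | hb <;> rw [hb]
  · ring
  · rw [Nat.cast_sub (by have := Q.b_lt_r; omega)]
    ring

lemma corr_eq_sum_of_b'_eq_one (Q : Basket) (h : Q.b' = 1) (m : ℕ) :
    Q.corr m = ∑ j ∈ Finset.Icc 1 (m - 1), corrTerm Q.r j := by
  rw [corr_eq_sum_corrTerm]
  refine Finset.sum_congr rfl fun j _ => ?_
  rcases Q.b'_eq_one_iff.1 h with hb | hb
  · rw [hb, one_mul]
  · apply corrTerm_eq_of_add_modEq_zero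
    rw [hb, ← Nat.succ_mul, Nat.succ_eq_add_one, Nat.sub_add_cancel (by have := Q.b_lt_r; omega)]
    exact Nat.modEq_zero_iff_dvd.2 (dvd_mul_right _ _)

lemma corr_four_of_b'_eq_one (Q : Basket) (h : Q.b' = 1) (hr : 3 ≤ Q.r) :
    Q.corr 4 = 3 - 7 / Q.r := by
  have hr0 : (Q.r : ℚ) ≠ 0 := by positivity
  rw [corr_eq_sum_of_b'_eq_one Q h, show Finset.Icc 1 (4 - 1) = {1, 2, 3} by decide,
    Finset.sum_insert (by decide), Finset.sum_insert (by decide), Finset.sum_singleton,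
    corrTerm_of_le (by omega), corrTerm_of_le (by omega), corrTerm_of_le hr]
  field_simp
  push_cast
  ring

lemma corr_four_of_r_eq_two (Q : Basket) (hr : Q.r = 2) : Q.corr 4 = 1 / 2 := by
  have hb' : Q.b' = 1 := Q.b'_eq_one_iff.2 (by have := Q.b_pos; have := Q.b_lt_r; omega)
  rw [corr_eq_sum_of_b'_eq_one Q hb', hr, show Finset.Icc 1 (4 - 1) = {1, 2, 3} by decide]
  norm_num [corrTerm]

end Basket

lemma B12_corr_two : B12.corr 2 = 1 / 4 := by
  norm_num [Basket.corr_two_s7, B12]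

lemma plurigenus_B12_B12 (K : ℚ) (Q : Basket) (m : ℕ) :
    plurigenus K {B12, B12, Q} m =
      1 / 12 * m * (m - 1) * (2 * m - 1) * K + 2 * B12.corr m + Q.corr m := by
  simp only [plurigenus, Multiset.insert_eq_cons, Multiset.map_cons, Multiset.sum_cons,
    Multiset.map_singleton, Multiset.sum_singleton]
  ring

theorem stmt7_general (K : ℚ) (hK : 0 < K) (Q : Basket)
    (h2 : plurigenus K {B12, B12, Q} 2 = 1) :
    K = 1 / (Q.r : ℚ) ∧ Q.b' = 1 ∧ (Q.b = 1 ∨ Q.b = Q.r - 1) ∧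
    (3 ≤ Q.r → plurigenus K {B12, B12, Q} 4 = 4) ∧
    (Q.r = 2 → plurigenus K {B12, B12, Q} 4 = 5) := by
  have hr : (0 : ℚ) < Q.r := Nat.cast_pos.2 (Q.b_pos.trans Q.b_lt_r)
  rw [plurigenus_B12_B12, B12_corr_two, Q.corr_two_s7] at h2
  have hmul : (Q.b : ℚ) * (Q.r - Q.b) = (1 - K) * Q.r := by
    norm_num at h2
    field_simp at h2
    linarith
  have hb' : Q.b' = 1 := by
    refine Q.b'_eq_one_iff.2 (Q.b_eq_one_or_of_mul_sub_lt ?_)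
    have : ((Q.b * (Q.r - Q.b) : ℕ) : ℚ) < Q.r := by
      push_cast [Nat.cast_sub Q.b_lt_r.le]
      nlinarith
    exact_mod_cast this
  have hKr : K = 1 / Q.r := by
    rw [Q.mul_sub_eq_of_b'_eq_one hb'] at hmul
    field_simp
    linarith
  have hB12 : B12.corr 4 = 1 / 2 := B12.corr_four_of_r_eq_two rfl
  refine ⟨hKr, hb', Q.b'_eq_one_iff.1 hb', fun hr3 => ?_, fun hr2 => ?_⟩
  · rw [plurigenus_B12_B12, hB12, Q.corr_four_of_b'_eq_one hb' hr3, hKr]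
    field_simp
    ring
  · rw [plurigenus_B12_B12, hB12, Q.corr_four_of_r_eq_two hr2, hKr, hr2]
    norm_num

theorem stmt7 (K : ℚ) (hK : 0 < K) (Q : Basket)
    (h2 : plurigenus K {B12, B12, Q} 2 = 1)
    (h3 : plurigenus K {B12, B12, Q} 3 = 2) :
    K = 1 / (Q.r : ℚ) ∧ Q.b' = 1 ∧ (Q.b = 1 ∨ Q.b = Q.r - 1) ∧
    (3 ≤ Q.r → plurigenus K {B12, B12, Q} 4 = 4) ∧
    (Q.r = 2 → plurigenus K {B12, B12, Q} 4 = 5) :=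
  stmt7_general K hK Q h2
end

section
/- Let K be a positive rational number and let B consist of exactly three baskets (1, 2), (b₂, 3), (b₃, 5), such that P_2(K, B) = 1 and P_3(K, B) = 2. Then K = 1/30, b₃ ∈ {1, 4}, P_4(K, B) = 3 and P_5(K, B) = 4. -/
/-! Since `gcd(b, r) = 1`, the residues `b j mod r` for `j < r` run through all residues, so
`l_Q(r) = (r² - 1)/12` and `l_Q(r + m) = l_Q(m) + (r² - 1)/12`; since `j ↦ r - j` negates them,
`l_Q(n + 1) + l_Q(r - n) = (r² - 1)/12`. This gives every correction term needed except
`l_Q(2) = b₃(5 - b₃)/10` for `Q = (b₃, 5)`. Then `P₃` alone forces `K = 1/30`, `P₂` forces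
`b₃(5 - b₃) = 4`, and `P₄`, `P₅` follow. -/

open Finset

def reidTerm (r k : ℕ) : ℚ := k * (r - k) / (2 * r)

lemma reidTerm_zero (r : ℕ) : reidTerm r 0 = 0 := by
  simp [reidTerm]

lemma reidTerm_eq_of_add_eq {r x y : ℕ} (h : x + y = r) : reidTerm r x = reidTerm r y := by
  subst h
  simp only [reidTerm]
  push_cast
  ring

lemma sum_range_natCast_mul_sub (n : ℕ) (r : ℚ) :
    ∑ k ∈ range n, (k : ℚ) * (r - k) = n * (n - 1) * (3 * r - 2 * n + 1) / 6 := by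
  induction n with
  | zero => simp
  | succ n ih =>
    rw [sum_range_succ, ih]
    push_cast
    ring

lemma sum_range_reidTerm {r : ℕ} (hr : r ≠ 0) :
    ∑ k ∈ range r, reidTerm r k = ((r : ℚ) ^ 2 - 1) / 12 := by
  simp only [reidTerm, ← sum_div, sum_range_natCast_mul_sub]
  field_simp
  ring

theorem Nat.Coprime.sum_range_mul_mod {M : Type*} [AddCommMonoid M] {b r : ℕ}
    (h : Nat.Coprime b r) (f : ℕ → M) :
    ∑ j ∈ range r, f (b * j % r) = ∑ k ∈ range r, f k := by
  rcases Nat.eq_zero_or_pos r with rfl | hr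
  · simp
  refine sum_nbij (fun j => b * j % r) (fun j _ => mem_range.2 (Nat.mod_lt _ hr)) ?_ ?_
    (fun _ _ => rfl)
  · intro i hi j hj hij
    have := Nat.ModEq.cancel_left_of_coprime (Nat.coprime_comm.1 h) hij
    simpa [Nat.ModEq, Nat.mod_eq_of_lt (mem_range.1 hi), Nat.mod_eq_of_lt (mem_range.1 hj)]
      using this
  · intro k hk
    obtain ⟨j, hj, hjk⟩ := Nat.exists_mul_mod_eq_of_coprime k h hr.ne'
    exact ⟨j, mem_range.2 hj, hjk.trans (Nat.mod_eq_of_lt (mem_range.1 hk))⟩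

theorem sum_range_succ_add_sum_range_sub {M : Type*} [AddCommMonoid M] {f : ℕ → M} {r n : ℕ}
    (h0 : f 0 = 0) (hf : ∀ j ≤ r, f (r - j) = f j) (hn : n < r) :
    ∑ j ∈ range (n + 1), f j + ∑ j ∈ range (r - n), f j = ∑ j ∈ range r, f j := by
  induction n with
  | zero => simp [h0]
  | succ n ih =>
    rw [← ih (by omega), show r - n = r - (n + 1) + 1 by omega, sum_range_succ _ (n + 1),
      sum_range_succ _ (r - (n + 1)), hf (n + 1) hn.le]
    abel

namespace Basket

variable (Q : Basket)

lemma corr_one : Q.corr 1 = 0 := rfl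

lemma corr_eq_sum_range (m : ℕ) :
    Q.corr m = ∑ j ∈ range m, reidTerm Q.r (Q.b * j % Q.r) := by
  cases m with
  | zero => rfl
  | succ m =>
    rw [range_eq_Ico, sum_eq_sum_Ico_succ_bot (Nat.succ_pos m), Nat.succ_eq_add_one, zero_add,
      Ico_add_one_right_eq_Icc]
    simp only [Nat.mul_zero, Nat.zero_mod, reidTerm_zero, zero_add, corr, Nat.add_sub_cancel]
    rfl

lemma corr_two_s10 : Q.corr 2 = reidTerm Q.r Q.b := by
  simp [corr_eq_sum_range, sum_range_succ, reidTerm_zero, Nat.mod_eq_of_lt Q.b_lt_r]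

lemma corr_self : Q.corr Q.r = ((Q.r : ℚ) ^ 2 - 1) / 12 := by
  rw [corr_eq_sum_range, Nat.Coprime.sum_range_mul_mod Q.coprime (reidTerm Q.r),
    sum_range_reidTerm (by have := Q.b_lt_r; omega)]

lemma corr_r_add (m : ℕ) : Q.corr (Q.r + m) = Q.corr m + ((Q.r : ℚ) ^ 2 - 1) / 12 := by
  rw [corr_eq_sum_range, sum_range_add, ← corr_eq_sum_range, corr_self, corr_eq_sum_range Q m,
    add_comm]
  simp [Nat.mul_add]

lemma reidTerm_mul_sub_mod {j : ℕ} (hj : j ≤ Q.r) :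
    reidTerm Q.r (Q.b * (Q.r - j) % Q.r) = reidTerm Q.r (Q.b * j % Q.r) := by
  have hr : 0 < Q.r := Q.b_pos.trans Q.b_lt_r
  have hdvd : Q.r ∣ Q.b * (Q.r - j) % Q.r + Q.b * j % Q.r := by
    rw [Nat.dvd_iff_mod_eq_zero, ← Nat.add_mod, ← Nat.mul_add, Nat.sub_add_cancel hj,
      Nat.mul_mod_left]
  obtain ⟨c, hc⟩ := hdvd
  have hc2 : c < 2 := by
    have := Nat.mod_lt (Q.b * (Q.r - j)) hr
    have := Nat.mod_lt (Q.b * j) hr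
    nlinarith
  interval_cases c
  · rw [show Q.b * (Q.r - j) % Q.r = 0 by omega, show Q.b * j % Q.r = 0 by omega]
  · exact reidTerm_eq_of_add_eq (by omega)

lemma corr_succ_add_corr_sub {n : ℕ} (hn : n < Q.r) :
    Q.corr (n + 1) + Q.corr (Q.r - n) = ((Q.r : ℚ) ^ 2 - 1) / 12 := by
  simp only [corr_eq_sum_range, ← corr_self]
  exact sum_range_succ_add_sum_range_sub (by simp [reidTerm_zero])
    (fun _ hj => Q.reidTerm_mul_sub_mod hj) hn

lemma corr_of_r_eq_two (hr : Q.r = 2) :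
    Q.corr 2 = 1 / 4 ∧ Q.corr 3 = 1 / 4 ∧ Q.corr 4 = 1 / 2 ∧ Q.corr 5 = 1 / 2 := by
  have h2 := Q.corr_self
  have h3 := Q.corr_r_add 1
  have h4 := Q.corr_r_add 2
  have h5 := Q.corr_r_add 3
  rw [hr] at h2 h3 h4 h5
  norm_num [corr_one] at h2 h3 h4 h5
  refine ⟨h2, ?_, ?_, ?_⟩ <;> linarith

lemma corr_of_r_eq_three (hr : Q.r = 3) :
    Q.corr 2 = 1 / 3 ∧ Q.corr 3 = 2 / 3 ∧ Q.corr 4 = 2 / 3 ∧ Q.corr 5 = 1 := by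
  have h2 := Q.corr_succ_add_corr_sub (n := 1) (by omega)
  have h3 := Q.corr_self
  have h4 := Q.corr_r_add 1
  have h5 := Q.corr_r_add 2
  rw [hr] at h2 h3 h4 h5
  norm_num [corr_one] at h2 h3 h4 h5
  refine ⟨by linarith, h3, by linarith, by linarith⟩

lemma corr_of_r_eq_five (hr : Q.r = 5) :
    Q.corr 3 = 1 ∧ Q.corr 4 = 2 - Q.corr 2 ∧ Q.corr 5 = 2 := by
  have h3 := Q.corr_succ_add_corr_sub (n := 2) (by omega)
  have h4 := Q.corr_succ_add_corr_sub (n := 1) (by omega)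
  have h5 := Q.corr_self
  rw [hr] at h3 h4 h5
  norm_num at h3 h4 h5
  refine ⟨by linarith, by linarith, h5⟩

lemma corr_two_eq_two_fifths_iff (hr : Q.r = 5) : Q.corr 2 = 2 / 5 ↔ Q.b = 1 ∨ Q.b = 4 := by
  have hb : Q.b < 5 := hr ▸ Q.b_lt_r
  rw [corr_two_s10, reidTerm, hr]
  interval_cases Q.b <;> norm_num

end Basket

lemma plurigenus_triple (K : ℚ) (A B C : Basket) (m : ℕ) :
    plurigenus K {A, B, C} m =
      m * (m - 1) * (2 * m - 1) / 12 * K + A.corr m + B.corr m + C.corr m := by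
  simp only [plurigenus, Multiset.insert_eq_cons, Multiset.map_cons, Multiset.map_singleton,
    Multiset.sum_cons, Multiset.sum_singleton]
  ring

theorem stmt10_general (K : ℚ) (Q₂ Q₃ : Basket)
    (hr₂ : Q₂.r = 3) (hr₃ : Q₃.r = 5)
    (h2 : plurigenus K {B12, Q₂, Q₃} 2 = 1)
    (h3 : plurigenus K {B12, Q₂, Q₃} 3 = 2) :
    K = 1 / 30 ∧ (Q₃.b = 1 ∨ Q₃.b = 4) ∧
      plurigenus K {B12, Q₂, Q₃} 4 = 3 ∧
      plurigenus K {B12, Q₂, Q₃} 5 = 4 := by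
  obtain ⟨c₁2, c₁3, c₁4, c₁5⟩ := B12.corr_of_r_eq_two rfl
  obtain ⟨c₂2, c₂3, c₂4, c₂5⟩ := Q₂.corr_of_r_eq_three hr₂
  obtain ⟨c₃3, c₃4, c₃5⟩ := Q₃.corr_of_r_eq_five hr₃
  simp only [plurigenus_triple, c₁2, c₁3, c₁4, c₁5, c₂2, c₂3, c₂4, c₂5, c₃3, c₃4, c₃5] at h2 h3 ⊢
  norm_num at h2 h3 ⊢
  have hK : K = 1 / 30 := by linarith
  have hc₃ : Q₃.corr 2 = 2 / 5 := by linarith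
  exact ⟨hK, (Q₃.corr_two_eq_two_fifths_iff hr₃).1 hc₃, by linarith, by linarith⟩

theorem stmt10 (K : ℚ) (hK : 0 < K) (Q₂ Q₃ : Basket)
    (hr₂ : Q₂.r = 3) (hr₃ : Q₃.r = 5)
    (h2 : plurigenus K {B12, Q₂, Q₃} 2 = 1)
    (h3 : plurigenus K {B12, Q₂, Q₃} 3 = 2) :
    K = 1 / 30 ∧ (Q₃.b = 1 ∨ Q₃.b = 4) ∧
      plurigenus K {B12, Q₂, Q₃} 4 = 3 ∧
      plurigenus K {B12, Q₂, Q₃} 5 = 4 :=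
  stmt10_general K Q₂ Q₃ hr₂ hr₃ h2 h3
end
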